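/- arXiv:2112.05912 — 4 statements merged into one kernel-verified Lean document; each statement's English description precedes it below -/
import Mathlib

section
/- For a smooth vector field f on ℝⁿ, suppose the symmetric part of the Jacobian of f is uniformly bounded above by -λ (with λ > 0) in the sense that for all x and v, vᵀ (Df(x))_s v ≤ -λ ‖v‖². Then for any two solutions x₁(t), x₂(t) of ẋ = f(x), the distance satisfies ‖x₁(t) - x₂(t)‖ ≤ ‖x₁(0) - x₂(0)‖ · e^{-λ t}, i.e., the two trajectories converge exponentially to each other. -/
/-!
The Jacobian bound integrates along segments to the one-sided Lipschitz estimate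
`⟪f a - f b, a - b⟫ ≤ -λ ‖a - b‖²`. Hence the difference `y = x₁ - x₂` of two solutions
satisfies `d/dt ‖y‖² = 2 ⟪f x₁ - f x₂, y⟫ ≤ -2λ ‖y‖²`, so `‖y t‖² e^{2λt}` is antitone.
-/

open Real
open scoped RealInnerProductSpace

variable {E : Type*} [NormedAddCommGroup E] [InnerProductSpace ℝ E]

theorem inner_sub_sub_le_of_fderiv_inner_le {f : E → E} (hf : Differentiable ℝ f) {c : ℝ}
    (hc : ∀ x v, ⟪fderiv ℝ f x v, v⟫ ≤ c * ‖v‖ ^ 2) (a b : E) :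
    ⟪f a - f b, a - b⟫ ≤ c * ‖a - b‖ ^ 2 := by
  set v := a - b
  have hφ : ∀ s : ℝ,
      HasDerivAt (fun s : ℝ => ⟪f (b + s • v), v⟫) ⟪fderiv ℝ f (b + s • v) v, v⟫ s := by
    intro s
    have hline : HasDerivAt (fun s : ℝ => b + s • v) v s := by
      simpa using ((hasDerivAt_id s).smul_const v).const_add b
    simpa using ((hf _).hasFDerivAt.comp_hasDerivAt s hline).inner ℝ (hasDerivAt_const s v)
  have hmvt := image_sub_le_mul_sub_of_deriv_le (fun s => (hφ s).differentiableAt)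
    (fun s => (hφ s).deriv ▸ hc _ v) zero_le_one
  simpa [v, inner_sub_left] using hmvt

theorem norm_le_norm_mul_exp_of_inner_deriv_le {y y' : ℝ → E} {c : ℝ}
    (hy : ∀ t, HasDerivAt y (y' t) t) (hc : ∀ t, ⟪y' t, y t⟫ ≤ c * ‖y t‖ ^ 2) {s t : ℝ}
    (hst : s ≤ t) : ‖y t‖ ≤ ‖y s‖ * exp (c * (t - s)) := by
  have hanti : Antitone fun t => ‖y t‖ ^ 2 * exp (-2 * c * t) := by
    refine antitone_of_hasDerivAt_nonpos (fun t => (hy t).norm_sq.mul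
      ((hasDerivAt_id t).const_mul (-2 * c)).exp) fun t => ?_
    have hinner := hc t
    rw [real_inner_comm] at hinner
    simp only [id, mul_one, Pi.zero_apply]
    nlinarith [mul_le_mul_of_nonneg_left hinner (exp_pos (-2 * c * t)).le]
  have hsq : ‖y t‖ ^ 2 ≤ (‖y s‖ * exp (c * (t - s))) ^ 2 := by
    calc ‖y t‖ ^ 2 = ‖y t‖ ^ 2 * exp (-2 * c * t) * exp (2 * c * t) := by
          rw [mul_assoc, ← exp_add]; simp
      _ ≤ ‖y s‖ ^ 2 * exp (-2 * c * s) * exp (2 * c * t) :=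
          mul_le_mul_of_nonneg_right (hanti hst) (exp_pos _).le
      _ = (‖y s‖ * exp (c * (t - s))) ^ 2 := by
          rw [mul_assoc, ← exp_add, mul_pow, ← exp_nat_mul]; ring_nf
  exact (pow_le_pow_iff_left₀ (norm_nonneg _) (by positivity) two_ne_zero).1 hsq

theorem contraction_exponential_convergence_general {n : ℕ}
    (f : EuclideanSpace ℝ (Fin n) → EuclideanSpace ℝ (Fin n))
    (hf : ContDiff ℝ 1 f) (lam : ℝ)
    (hcontract : ∀ x v : EuclideanSpace ℝ (Fin n),
      @inner ℝ _ _ (fderiv ℝ f x v) v ≤ -lam * ‖v‖ ^ 2)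
    (x₁ x₂ : ℝ → EuclideanSpace ℝ (Fin n))
    (hx₁ : ∀ t : ℝ, HasDerivAt x₁ (f (x₁ t)) t)
    (hx₂ : ∀ t : ℝ, HasDerivAt x₂ (f (x₂ t)) t) :
    ∀ t : ℝ, 0 ≤ t →
      ‖x₁ t - x₂ t‖ ≤ ‖x₁ 0 - x₂ 0‖ * Real.exp (-lam * t) := by
  intro t ht
  have hone_sided := inner_sub_sub_le_of_fderiv_inner_le (hf.differentiable one_ne_zero) hcontract
  simpa using norm_le_norm_mul_exp_of_inner_deriv_le (fun t => (hx₁ t).sub (hx₂ t))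
    (fun t => hone_sided (x₁ t) (x₂ t)) ht

theorem contraction_exponential_convergence {n : ℕ}
    (f : EuclideanSpace ℝ (Fin n) → EuclideanSpace ℝ (Fin n))
    (hf : ContDiff ℝ 1 f) (lam : ℝ) (hlam : 0 < lam)
    (hcontract : ∀ x v : EuclideanSpace ℝ (Fin n),
      @inner ℝ _ _ (fderiv ℝ f x v) v ≤ -lam * ‖v‖ ^ 2)
    (x₁ x₂ : ℝ → EuclideanSpace ℝ (Fin n))
    (hx₁ : ∀ t : ℝ, HasDerivAt x₁ (f (x₁ t)) t)
    (hx₂ : ∀ t : ℝ, HasDerivAt x₂ (f (x₂ t)) t) :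
    ∀ t : ℝ, 0 ≤ t →
      ‖x₁ t - x₂ t‖ ≤ ‖x₁ 0 - x₂ 0‖ * Real.exp (-lam * t) :=
  contraction_exponential_convergence_general f hf lam hcontract x₁ x₂ hx₁ hx₂
end

section
/- Consider the 2N-dimensional coupled Rayleigh–van der Pol system ẋᵢ = yᵢ + (ca/N)Σⱼ(xⱼ - xᵢ), ẏᵢ = -(αxᵢ² + βyᵢ² - γ)yᵢ - ω²xᵢ + (ca/N)Σⱼ(yⱼ - yᵢ), with α ≥ 0, β ≥ 0, ca ≥ 0, ω ≠ 0, γ < 0. Then V(x,y) = Σᵢ (xᵢ²/2 + yᵢ²/(2ω²)) is a strict Lyapunov function: V(0) = 0, V > 0 away from 0, V → ∞ as ‖(x,y)‖ → ∞, and its time derivative along solutions satisfies V̇ ≤ (γ/ω²) Σᵢ yᵢ² ≤ 0. -/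
/-! The coupling terms contribute `k ∑ᵢ zᵢ ∑ⱼ (zⱼ - zᵢ) = k ((∑ zᵢ)² - N ∑ zᵢ²) ≤ 0` (Cauchy–Schwarz),
the rotation terms `xᵢ yᵢ - yᵢ ω² xᵢ / ω²` cancel, and the damping contributes
`(γ - α xᵢ² - β yᵢ²) yᵢ² / ω² ≤ γ yᵢ² / ω²`. Coercivity holds because `V` dominates a positive
multiple of `‖(x, y)‖²`. -/

open Finset Filter

/-- The Lyapunov function `V(x,y) = ∑ i, (xᵢ²/2 + yᵢ²/(2ω²))`. -/
noncomputable def rvdpLyapunov (ω : ℝ) (N : ℕ) (p : (Fin N → ℝ) × (Fin N → ℝ)) : ℝ :=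
  ∑ i : Fin N, ((p.1 i) ^ 2 / 2 + (p.2 i) ^ 2 / (2 * ω ^ 2))

theorem sum_mul_sum_sub_nonpos {ι : Type*} [Fintype ι] (z : ι → ℝ) :
    ∑ i, z i * ∑ j, (z j - z i) ≤ 0 := by
  have hexpand : ∑ i, z i * ∑ j, (z j - z i)
      = (∑ i, z i) ^ 2 - Fintype.card ι * ∑ i, z i ^ 2 := by
    simp only [sum_sub_distrib, sum_const, card_univ, nsmul_eq_mul, mul_sub, ← sum_mul]
    rw [mul_sum (a := (Fintype.card ι : ℝ))]
    simp only [sq, mul_left_comm (z _)]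
  rw [hexpand, sub_nonpos]
  simpa using sq_sum_le_card_mul_sum_sq (s := univ) (f := z)

theorem rvdp_lyapunov_deriv_le {ι : Type*} [Fintype ι] (k α β γ ω : ℝ)
    (hk : 0 ≤ k) (hα : 0 ≤ α) (hβ : 0 ≤ β) (hω : ω ≠ 0) (x y : ι → ℝ) :
    ∑ i, (x i * (y i + k * ∑ j, (x j - x i))
        + y i * (-(α * x i ^ 2 + β * y i ^ 2 - γ) * y i - ω ^ 2 * x i
            + k * ∑ j, (y j - y i)) / ω ^ 2)
      ≤ γ / ω ^ 2 * ∑ i, y i ^ 2 := by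
  have hsummand : ∀ i, x i * (y i + k * ∑ j, (x j - x i))
        + y i * (-(α * x i ^ 2 + β * y i ^ 2 - γ) * y i - ω ^ 2 * x i
            + k * ∑ j, (y j - y i)) / ω ^ 2
      ≤ k * (x i * ∑ j, (x j - x i)) + k / ω ^ 2 * (y i * ∑ j, (y j - y i))
          + γ / ω ^ 2 * y i ^ 2 := by
    intro i
    have hdamping : 0 ≤ (α * x i ^ 2 + β * y i ^ 2) * y i ^ 2 / ω ^ 2 := by positivity
    have hsplit : x i * (y i + k * ∑ j, (x j - x i))
          + y i * (-(α * x i ^ 2 + β * y i ^ 2 - γ) * y i - ω ^ 2 * x i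
              + k * ∑ j, (y j - y i)) / ω ^ 2
        = k * (x i * ∑ j, (x j - x i)) + k / ω ^ 2 * (y i * ∑ j, (y j - y i))
          + γ / ω ^ 2 * y i ^ 2 - (α * x i ^ 2 + β * y i ^ 2) * y i ^ 2 / ω ^ 2 := by
      field_simp
      ring
    linarith
  have hx := mul_nonpos_of_nonneg_of_nonpos hk (sum_mul_sum_sub_nonpos x)
  have hy := mul_nonpos_of_nonneg_of_nonpos (by positivity : 0 ≤ k / ω ^ 2)
    (sum_mul_sum_sub_nonpos y)
  calc _ ≤ ∑ i, (k * (x i * ∑ j, (x j - x i)) + k / ω ^ 2 * (y i * ∑ j, (y j - y i))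
          + γ / ω ^ 2 * y i ^ 2) := sum_le_sum fun i _ => hsummand i
    _ = k * ∑ i, x i * ∑ j, (x j - x i) + k / ω ^ 2 * ∑ i, y i * ∑ j, (y j - y i)
          + γ / ω ^ 2 * ∑ i, y i ^ 2 := by
      simp only [sum_add_distrib, mul_sum]
    _ ≤ γ / ω ^ 2 * ∑ i, y i ^ 2 := by linarith

theorem sq_norm_prod_pi_le_sum_sq {ι : Type*} [Fintype ι] (p : (ι → ℝ) × (ι → ℝ)) :
    ‖p‖ ^ 2 ≤ ∑ i, (p.1 i ^ 2 + p.2 i ^ 2) := by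
  set S := ∑ i, (p.1 i ^ 2 + p.2 i ^ 2)
  have hS : 0 ≤ S := sum_nonneg fun i _ => by positivity
  have hterm : ∀ i, p.1 i ^ 2 + p.2 i ^ 2 ≤ S :=
    fun i => single_le_sum (f := fun i => p.1 i ^ 2 + p.2 i ^ 2)
      (fun j _ => by positivity) (mem_univ i)
  have hnorm : ‖p‖ ≤ √S := by
    refine max_le ((pi_norm_le_iff_of_nonneg (Real.sqrt_nonneg S)).2 fun i => ?_)
      ((pi_norm_le_iff_of_nonneg (Real.sqrt_nonneg S)).2 fun i => ?_)
    · exact Real.abs_le_sqrt (by nlinarith [hterm i, sq_nonneg (p.2 i)])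
    · exact Real.abs_le_sqrt (by nlinarith [hterm i, sq_nonneg (p.1 i)])
  calc ‖p‖ ^ 2 ≤ √S ^ 2 := pow_le_pow_left₀ (norm_nonneg p) hnorm 2
    _ = S := Real.sq_sqrt hS

theorem tendsto_cocompact_atTop_of_sq_norm_le {E : Type*} [NormedAddCommGroup E] [ProperSpace E]
    {f : E → ℝ} {m : ℝ} (hm : 0 < m) (hf : ∀ p, m * ‖p‖ ^ 2 ≤ f p) :
    Tendsto f (cocompact E) atTop :=
  tendsto_atTop_mono hf <|
    ((tendsto_pow_atTop two_ne_zero).const_mul_atTop hm).comp tendsto_norm_cocompact_atTop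

section Lyapunov

variable {ω : ℝ} {N : ℕ}

theorem rvdpLyapunov_zero : rvdpLyapunov ω N (0, 0) = 0 := by
  simp [rvdpLyapunov]

theorem rvdpLyapunov_pos (hω : ω ≠ 0) {p : (Fin N → ℝ) × (Fin N → ℝ)} (hp : p ≠ 0) :
    0 < rvdpLyapunov ω N p := by
  obtain ⟨i, hi⟩ : ∃ i, p.1 i ≠ 0 ∨ p.2 i ≠ 0 := by
    by_contra! h
    exact hp (Prod.ext (funext fun i => (h i).1) (funext fun i => (h i).2))
  refine sum_pos' (fun j _ => by positivity) ⟨i, mem_univ i, ?_⟩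
  rcases hi with h | h
  · exact add_pos_of_pos_of_nonneg (by positivity) (by positivity)
  · exact add_pos_of_nonneg_of_pos (by positivity) (by positivity)

theorem min_mul_sq_norm_le_rvdpLyapunov (hω : ω ≠ 0) (p : (Fin N → ℝ) × (Fin N → ℝ)) :
    min (1 / 2) (1 / (2 * ω ^ 2)) * ‖p‖ ^ 2 ≤ rvdpLyapunov ω N p := by
  set m := min (1 / 2) (1 / (2 * ω ^ 2))
  have hm : 0 ≤ m := le_min (by norm_num) (by positivity)
  calc m * ‖p‖ ^ 2 ≤ m * ∑ i, (p.1 i ^ 2 + p.2 i ^ 2) :=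
        mul_le_mul_of_nonneg_left (sq_norm_prod_pi_le_sum_sq p) hm
    _ = ∑ i, (m * p.1 i ^ 2 + m * p.2 i ^ 2) := by simp only [mul_sum, mul_add]
    _ ≤ rvdpLyapunov ω N p := by
      refine sum_le_sum fun i _ => add_le_add ?_ ?_
      · calc m * p.1 i ^ 2 ≤ 1 / 2 * p.1 i ^ 2 :=
              mul_le_mul_of_nonneg_right (min_le_left _ _) (sq_nonneg _)
          _ = p.1 i ^ 2 / 2 := by ring
      · calc m * p.2 i ^ 2 ≤ 1 / (2 * ω ^ 2) * p.2 i ^ 2 :=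
              mul_le_mul_of_nonneg_right (min_le_right _ _) (sq_nonneg _)
          _ = p.2 i ^ 2 / (2 * ω ^ 2) := by ring

theorem tendsto_rvdpLyapunov_cocompact (hω : ω ≠ 0) :
    Tendsto (rvdpLyapunov ω N) (cocompact ((Fin N → ℝ) × (Fin N → ℝ))) atTop :=
  tendsto_cocompact_atTop_of_sq_norm_le (lt_min (by norm_num) (by positivity))
    (min_mul_sq_norm_le_rvdpLyapunov hω)

end Lyapunov

theorem rvdp_strict_lyapunov_general (N : ℕ) (c a α β γ ω : ℝ)
    (hα : 0 ≤ α) (hβ : 0 ≤ β) (hca : 0 ≤ c * a) (hω : ω ≠ 0) (hγ : γ < 0) :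
    rvdpLyapunov ω N (0, 0) = 0 ∧
    (∀ p : (Fin N → ℝ) × (Fin N → ℝ), p ≠ 0 → 0 < rvdpLyapunov ω N p) ∧
    Tendsto (rvdpLyapunov ω N) (cocompact ((Fin N → ℝ) × (Fin N → ℝ))) atTop ∧
    (∀ x y : Fin N → ℝ,
      (∑ i : Fin N,
          (x i * (y i + (c * a / N) * ∑ j : Fin N, (x j - x i))
            + y i * (-(α * (x i) ^ 2 + β * (y i) ^ 2 - γ) * y i - ω ^ 2 * x i
                + (c * a / N) * ∑ j : Fin N, (y j - y i)) / ω ^ 2))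
        ≤ (γ / ω ^ 2) * ∑ i : Fin N, (y i) ^ 2 ∧
      (γ / ω ^ 2) * ∑ i : Fin N, (y i) ^ 2 ≤ 0) := by
  refine ⟨rvdpLyapunov_zero, fun p hp => rvdpLyapunov_pos hω hp,
    tendsto_rvdpLyapunov_cocompact hω, fun x y => ⟨?_, ?_⟩⟩
  · exact rvdp_lyapunov_deriv_le _ α β γ ω (by positivity) hα hβ hω x y
  · exact mul_nonpos_of_nonpos_of_nonneg (div_nonpos_of_nonpos_of_nonneg hγ.le (by positivity))
      (sum_nonneg fun i _ => sq_nonneg (y i))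

theorem rvdp_strict_lyapunov (N : ℕ) (hN : 1 ≤ N) (c a α β γ ω : ℝ)
    (hα : 0 ≤ α) (hβ : 0 ≤ β) (hca : 0 ≤ c * a) (hω : ω ≠ 0) (hγ : γ < 0) :
    rvdpLyapunov ω N (0, 0) = 0 ∧
    (∀ p : (Fin N → ℝ) × (Fin N → ℝ), p ≠ 0 → 0 < rvdpLyapunov ω N p) ∧
    Tendsto (rvdpLyapunov ω N) (cocompact ((Fin N → ℝ) × (Fin N → ℝ))) atTop ∧
    (∀ x y : Fin N → ℝ,
      (∑ i : Fin N,
          (x i * (y i + (c * a / N) * ∑ j : Fin N, (x j - x i))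
            + y i * (-(α * (x i) ^ 2 + β * (y i) ^ 2 - γ) * y i - ω ^ 2 * x i
                + (c * a / N) * ∑ j : Fin N, (y j - y i)) / ω ^ 2))
        ≤ (γ / ω ^ 2) * ∑ i : Fin N, (y i) ^ 2 ∧
      (γ / ω ^ 2) * ∑ i : Fin N, (y i) ^ 2 ≤ 0) :=
  rvdp_strict_lyapunov_general N c a α β γ ω hα hβ hca hω hγ
end

section
/- Let g(x,y) = c²a² - caγ + caα x² + 3caβ y² - α²x²y², and suppose ca > max{γ, 0}, α ≠ 0, α > 3β, r² ≤ (caα - 3caβ)/α², and 3βr² > γ - ca. Then g(x,y) > 0 for all (x,y) with x² + y² ≤ r². -/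
/-!
Write `K = c a`. Since `y² ≤ r²`, the hypothesis on `r` gives `K α - α² y² ≥ 3 K β`, so the
`x²`-coefficient of `g` can be traded for `3 K β` and `g(x, y) ≥ K (K - γ + 3 β (x² + y²))`.
The right-hand side is affine in `s = x² + y² ∈ [0, r²]` and positive at both endpoints:
at `s = 0` because `K > γ`, at `s = r²` because `3 β r² > γ - K`.
-/

lemma pos_add_mul_of_pos_of_pos {p q s t : ℝ} (hs : 0 ≤ s) (hst : s ≤ t) (h₀ : 0 < p)
    (ht : 0 < p + q * t) : 0 < p + q * s := by
  rcases le_total 0 q with hq | hq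
  · nlinarith
  · nlinarith

lemma le_contraction_poly {K α β γ x y : ℝ} (hy : α ^ 2 * y ^ 2 ≤ K * α - 3 * K * β) :
    K * (K - γ + 3 * β * (x ^ 2 + y ^ 2)) ≤
      K ^ 2 - K * γ + K * α * x ^ 2 + 3 * K * β * y ^ 2 - α ^ 2 * x ^ 2 * y ^ 2 := by
  have hx : 0 ≤ x ^ 2 * (K * α - α ^ 2 * y ^ 2 - 3 * K * β) :=
    mul_nonneg (sq_nonneg x) (by linarith)
  linarith

theorem contraction_region_case2_general (c a α β γ r : ℝ)
    (hca0 : 0 < c * a) (hcaγ : γ < c * a) (hα : α ≠ 0)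
    (hr2 : r ^ 2 ≤ (c * a * α - 3 * c * a * β) / α ^ 2)
    (hβr : γ - c * a < 3 * β * r ^ 2) :
    ∀ x y : ℝ, x ^ 2 + y ^ 2 ≤ r ^ 2 →
      0 < c ^ 2 * a ^ 2 - c * a * γ + c * a * α * x ^ 2 + 3 * c * a * β * y ^ 2
          - α ^ 2 * x ^ 2 * y ^ 2 := by
  intro x y hxy
  have hα2 : 0 < α ^ 2 := by positivity
  have hrα : α ^ 2 * r ^ 2 ≤ c * a * α - 3 * (c * a) * β := by
    rw [le_div_iff₀ hα2] at hr2
    linarith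
  have hyα : α ^ 2 * y ^ 2 ≤ c * a * α - 3 * (c * a) * β :=
    (mul_le_mul_of_nonneg_left (by nlinarith [sq_nonneg x]) hα2.le).trans hrα
  have hpos : 0 < c * a - γ + 3 * β * (x ^ 2 + y ^ 2) :=
    pos_add_mul_of_pos_of_pos (by positivity) hxy (by linarith) (by linarith)
  calc 0 < c * a * (c * a - γ + 3 * β * (x ^ 2 + y ^ 2)) := mul_pos hca0 hpos
    _ ≤ (c * a) ^ 2 - c * a * γ + c * a * α * x ^ 2 + 3 * (c * a) * β * y ^ 2
          - α ^ 2 * x ^ 2 * y ^ 2 := le_contraction_poly hyα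
    _ = _ := by ring

theorem contraction_region_case2 (c a α β γ r : ℝ) (hr : 0 < r)
    (hca0 : 0 < c * a) (hcaγ : γ < c * a) (hα : α ≠ 0) (hαβ : 3 * β < α)
    (hr2 : r ^ 2 ≤ (c * a * α - 3 * c * a * β) / α ^ 2)
    (hβr : γ - c * a < 3 * β * r ^ 2) :
    ∀ x y : ℝ, x ^ 2 + y ^ 2 ≤ r ^ 2 →
      0 < c ^ 2 * a ^ 2 - c * a * γ + c * a * α * x ^ 2 + 3 * c * a * β * y ^ 2
          - α ^ 2 * x ^ 2 * y ^ 2 :=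
  contraction_region_case2_general c a α β γ r hca0 hcaγ hα hr2 hβr
end

section
/- Let g(x,y) = c²a² - caγ + caα x² + 3caβ y² - α²x²y², and suppose ca > max{γ, 0}, α ≠ 0, 3caαβ + α²(ca - γ) > 0, r² ≥ max{(caα - 3caβ)/α², (3caβ - caα)/α²}, and (caα + 3caβ - 2√(3c²a²αβ + α²ca(ca - γ)))/α² < r² < (caα + 3caβ + 2√(3c²a²αβ + α²ca(ca - γ)))/α². Then g(x,y) > 0 for every (x,y) with x² + y² ≤ r². -/
/-!
Put `u = x²`, `v = y²`, `R = r²`. Then `g` is the bilinear function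
`k + A u + B v - α² u v` (with `k = ca(ca - γ)`, `A = caα`, `B = 3caβ`) on the triangle
`u, v ≥ 0`, `u + v ≤ R`, so it is positive there once it is positive on the vertex `(0, 0)`, the
edge `u = 0` and the hypotenuse `u + v = R`. On the hypotenuse it is a quadratic in `v` with leading
coefficient `α²`, whose discriminant `(α²R - A - B)² - 4(AB + α²k)` is negative exactly when `α²R`
lies strictly between `A + B ∓ 2√(AB + α²k)`. The edge `u = 0` is affine in `v`, and its endpoints
are `k > 0` and a point of the hypotenuse.
-/

section OrderedField

variable {𝕜 : Type*} [Field 𝕜] [LinearOrder 𝕜] [IsStrictOrderedRing 𝕜]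

lemma quadratic_pos_of_discrim_neg {a b c : 𝕜} (ha : 0 < a) (h : discrim a b c < 0) (x : 𝕜) :
    0 < a * (x * x) + b * x + c := by
  have h4a : 4 * a * (a * (x * x) + b * x + c) = (2 * a * x + b) ^ 2 - discrim a b c := by
    rw [discrim]; ring
  have : 0 < 4 * a * (a * (x * x) + b * x + c) := by
    rw [h4a]; nlinarith [sq_nonneg (2 * a * x + b)]
  exact pos_of_mul_pos_right this (by positivity)

lemma affine_pos_of_pos_of_pos {p q T t : 𝕜} (h₀ : 0 < p) (hT : 0 < p + q * T)
    (ht₀ : 0 ≤ t) (htT : t ≤ T) : 0 < p + q * t := by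
  rcases ht₀.eq_or_lt with rfl | ht
  · simpa using h₀
  · have hTpos : 0 < T := ht.trans_le htT
    have hcomb : T * (p + q * t) = (T - t) * p + t * (p + q * T) := by ring
    have : 0 < T * (p + q * t) := by
      rw [hcomb]; nlinarith [mul_nonneg (sub_nonneg.2 htT) h₀.le, mul_pos ht hT]
    exact pos_of_mul_pos_right this hTpos.le

theorem bilinear_pos_on_triangle {k A B m R : 𝕜} (hk : 0 < k) (hm : 0 < m)
    (hdisc : (m * R - (A + B)) ^ 2 < 4 * (A * B + m * k)) {u v : 𝕜}
    (hu : 0 ≤ u) (hv : 0 ≤ v) (huv : u + v ≤ R) :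
    0 < k + A * u + B * v - m * u * v := by
  have hypotenuse : ∀ w, 0 < k + B * w + (A - m * w) * (R - w) := by
    intro w
    have hq := quadratic_pos_of_discrim_neg (b := B - A - m * R) (c := k + A * R) hm
      (by rw [discrim]; linear_combination hdisc) w
    linear_combination hq
  have edge : 0 < k + B * v :=
    affine_pos_of_pos_of_pos hk (by simpa using hypotenuse R) hv (by linarith)
  have := affine_pos_of_pos_of_pos edge (hypotenuse v) hu (by linarith)
  linear_combination this

end OrderedField

lemma sq_sub_lt_four_mul_of_lt_two_sqrt {t s D : ℝ}
    (hlo : s - 2 * √D < t) (hhi : t < s + 2 * √D) : (t - s) ^ 2 < 4 * D := by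
  have : ((t - s) / 2) ^ 2 < D := Real.sq_lt.2 ⟨by linarith, by linarith⟩
  linarith

theorem contraction_region_case4_general (c a α β γ r : ℝ)
    (hca0 : 0 < c * a) (hcaγ : γ < c * a) (hα : α ≠ 0)
    (hlo : (c * a * α + 3 * c * a * β
        - 2 * Real.sqrt (3 * c ^ 2 * a ^ 2 * α * β + α ^ 2 * c * a * (c * a - γ))) / α ^ 2
        < r ^ 2)
    (hhi : r ^ 2 < (c * a * α + 3 * c * a * β
        + 2 * Real.sqrt (3 * c ^ 2 * a ^ 2 * α * β + α ^ 2 * c * a * (c * a - γ))) / α ^ 2) :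
    ∀ x y : ℝ, x ^ 2 + y ^ 2 ≤ r ^ 2 →
      0 < c ^ 2 * a ^ 2 - c * a * γ + c * a * α * x ^ 2 + 3 * c * a * β * y ^ 2
          - α ^ 2 * x ^ 2 * y ^ 2 := by
  intro x y hxy
  have hα2 : 0 < α ^ 2 := by positivity
  have hk : 0 < c ^ 2 * a ^ 2 - c * a * γ := by nlinarith
  have hdisc := sq_sub_lt_four_mul_of_lt_two_sqrt
    ((div_lt_iff₀' hα2).1 hlo) ((lt_div_iff₀' hα2).1 hhi)
  have := bilinear_pos_on_triangle hk hα2 (A := c * a * α) (B := 3 * c * a * β)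
    (by linear_combination hdisc) (sq_nonneg x) (sq_nonneg y) hxy
  linear_combination this

theorem contraction_region_case4 (c a α β γ r : ℝ) (hr : 0 < r)
    (hca0 : 0 < c * a) (hcaγ : γ < c * a) (hα : α ≠ 0)
    (hpos : 0 < 3 * c * a * α * β + α ^ 2 * (c * a - γ))
    (hr2 : max ((c * a * α - 3 * c * a * β) / α ^ 2)
        ((3 * c * a * β - c * a * α) / α ^ 2) ≤ r ^ 2)
    (hlo : (c * a * α + 3 * c * a * β
        - 2 * Real.sqrt (3 * c ^ 2 * a ^ 2 * α * β + α ^ 2 * c * a * (c * a - γ))) / α ^ 2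
        < r ^ 2)
    (hhi : r ^ 2 < (c * a * α + 3 * c * a * β
        + 2 * Real.sqrt (3 * c ^ 2 * a ^ 2 * α * β + α ^ 2 * c * a * (c * a - γ))) / α ^ 2) :
    ∀ x y : ℝ, x ^ 2 + y ^ 2 ≤ r ^ 2 →
      0 < c ^ 2 * a ^ 2 - c * a * γ + c * a * α * x ^ 2 + 3 * c * a * β * y ^ 2
          - α ^ 2 * x ^ 2 * y ^ 2 :=
  contraction_region_case4_general c a α β γ r hca0 hcaγ hα hlo hhi
end
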